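/- arXiv:2401.14384 — 5 statements merged into one kernel-verified Lean document; each statement's English description precedes it below -/
import Mathlib

section
/- Let X be a Hausdorff space and let S ⊆ F(X) be a family of nonempty closed subsets of X that is up-directed with respect to set inclusion (for every finite T ⊆ S there is S ∈ S containing every member of T). Then, as a net indexed by (S, ⊆), the family S converges in the Vietoris topology to the closure of ⋃S. -/
open Set Filter Topology

/-- The hyperspace of all nonempty closed subsets of `X`. -/
def HypF (X : Type*) [TopologicalSpace X] : Type _ :=
  {S : Set X // S.Nonempty ∧ IsClosed S}

variable {X : Type*} [TopologicalSpace X]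

namespace HypF

/-- The Vietoris topology on `HypF X`, generated by the canonical basic sets
`⟨𝒱⟩ = {S | S ⊆ ⋃𝒱 ∧ ∀ V ∈ 𝒱, S ∩ V ≠ ∅}` where `𝒱` runs over the finite
families of open subsets of `X`. -/
instance : TopologicalSpace (HypF X) :=
  TopologicalSpace.generateFrom
    {B : Set (HypF X) | ∃ 𝒱 : Finset (Set X), (∀ V ∈ 𝒱, IsOpen V) ∧
      B = {S : HypF X | S.1 ⊆ (⋃ V ∈ 𝒱, V) ∧ ∀ V ∈ 𝒱, (S.1 ∩ V).Nonempty}}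

/-- The hyperspace is partially ordered by set-theoretic inclusion. -/
instance : PartialOrder (HypF X) :=
  PartialOrder.lift Subtype.val Subtype.coe_injective

/-- The whole space `X` as an element of its hyperspace. -/
def top (X : Type*) [TopologicalSpace X] [Nonempty X] : HypF X :=
  ⟨univ, univ_nonempty, isClosed_univ⟩

/-- The union of two members of the hyperspace. -/
def union (T S : HypF X) : HypF X :=
  ⟨T.1 ∪ S.1, T.2.1.mono subset_union_left, T.2.2.union S.2.2⟩

end HypF

/-- A continuous selection for the Vietoris hyperspace `HypF X`. -/
def IsContinuousSelection (f : HypF X → X) : Prop :=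
  Continuous f ∧ ∀ S : HypF X, f S ∈ S.1

/-- `p` is a cut point of `X`: `X \ {p} = U ∪ V` with `cl U ∩ cl V = {p}`. -/
def IsCutPoint (p : X) : Prop :=
  ∃ U V : Set X, ({p}ᶜ : Set X) = U ∪ V ∧ closure U ∩ closure V = {p}

/-- `p` is a butterfly point of `X`. -/
def IsButterflyPoint (p : X) : Prop :=
  ∃ F G : Set X, IsClosed F ∧ IsClosed G ∧
    closure (F \ {p}) ∩ closure (G \ {p}) = {p}

/-- `X` is totally disconnected at `p`: `{p}` is an intersection of clopen sets. -/
def TotallyDisconnectedAt (p : X) : Prop :=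
  ∃ 𝒞 : Set (Set X), (∀ C ∈ 𝒞, IsClopen C) ∧ ⋂₀ 𝒞 = {p}

/-- `y` has a countable base of clopen neighbourhoods in `Y`. -/
def HasCountableClopenBase {Y : Type*} [TopologicalSpace Y] (y : Y) : Prop :=
  ∃ ℬ : Set (Set Y), ℬ.Countable ∧ (∀ B ∈ ℬ, IsClopen B ∧ y ∈ B) ∧
    ∀ W : Set Y, IsOpen W → y ∈ W → ∃ B ∈ ℬ, B ⊆ W

/-- `p` is countably-approachable: it is isolated, or it has a countable clopen
base in `cl U` for some open `U ⊆ X \ {p}` with `cl U = U ∪ {p}`. -/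
def CountablyApproachable (p : X) : Prop :=
  IsOpen ({p} : Set X) ∨
    ∃ U : Set X, IsOpen U ∧ U ⊆ ({p}ᶜ : Set X) ∧ closure U = U ∪ {p} ∧
      ∀ hp : p ∈ closure U, HasCountableClopenBase (⟨p, hp⟩ : closure U)

/-- `p` is selection maximal: some continuous selection `f` satisfies `f S = p`
whenever `p ∈ S`. -/
def SelectionMaximal (p : X) : Prop :=
  ∃ f : HypF X → X, IsContinuousSelection f ∧ ∀ S : HypF X, p ∈ S.1 → f S = p

/-- `ℬ` is a local base at `p`. -/
def IsLocalBaseAt (p : X) (ℬ : Set (Set X)) : Prop :=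
  (∀ B ∈ ℬ, IsOpen B ∧ p ∈ B) ∧
    ∀ W : Set X, IsOpen W → p ∈ W → ∃ B ∈ ℬ, B ⊆ W

/-- `X_Θ`: the set of values `f(X)` of continuous selections for `HypF X`. -/
def thetaSet (X : Type*) [TopologicalSpace X] [Nonempty X] : Set X :=
  {p | ∃ f : HypF X → X, IsContinuousSelection f ∧ f (HypF.top X) = p}

/-- `X_Ω`: the set of countably-approachable points of `X`. -/
def omegaSet (X : Type*) [TopologicalSpace X] : Set X :=
  {p | CountablyApproachable p}

/-- `X_Θ*`: the selection maximal points of `X_Θ`. -/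
def thetaStarSet (X : Type*) [TopologicalSpace X] [Nonempty X] : Set X :=
  {p ∈ thetaSet X | SelectionMaximal p}

/-- `X_Ω*`: the points of `X_Ω` with a countable clopen base in `X`. -/
def omegaStarSet (X : Type*) [TopologicalSpace X] : Set X :=
  {p ∈ omegaSet X | HasCountableClopenBase p}

/-- `F₂(X)`: the subsets of `X` with at least one and at most two points. -/
def HypF2 (X : Type*) : Type _ := {S : Set X // ∃ x y : X, S = {x, y}}

/-- The Vietoris topology on `HypF2 X`. -/
instance : TopologicalSpace (HypF2 X) :=
  TopologicalSpace.generateFrom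
    {B : Set (HypF2 X) | ∃ 𝒱 : Finset (Set X), (∀ V ∈ 𝒱, IsOpen V) ∧
      B = {S : HypF2 X | S.1 ⊆ (⋃ V ∈ 𝒱, V) ∧ ∀ V ∈ 𝒱, (S.1 ∩ V).Nonempty}}

/-- The unordered pair `{x, y}` as an element of `HypF2 X`. -/
def pairF {X : Type*} (x y : X) : HypF2 X := ⟨{x, y}, x, y, rfl⟩

/-- A weak selection for `X`. -/
def IsWeakSelection {X : Type*} (σ : HypF2 X → X) : Prop := ∀ S : HypF2 X, σ S ∈ S.1

/-- The strict relation `x <_σ y` generated by a weak selection `σ`. -/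
def wsLT {X : Type*} (σ : HypF2 X → X) (x y : X) : Prop := σ (pairF x y) = x ∧ x ≠ y

/-- Every nonempty up-directed family `𝒮 ⊆ F(X)`, viewed as a net
indexed by `(𝒮, ⊆)`, converges in the Vietoris topology to `cl (⋃ 𝒮)`. -/
theorem statement6 (X : Type*) [TopologicalSpace X] [T2Space X]
    (𝒮 : Set (HypF X)) (hne : 𝒮.Nonempty)
    (hdir : ∀ T : Finset (HypF X), ↑T ⊆ 𝒮 → ∃ s ∈ 𝒮, ∀ t ∈ T, t ≤ s)
    (L : HypF X) (hL : L.1 = closure (⋃ s ∈ 𝒮, s.1)) :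
    Tendsto (fun s : 𝒮 => (s : HypF X)) atTop (𝓝 L) := by
  classical
  haveI : Nonempty 𝒮 := hne.to_subtype
  haveI : IsDirected 𝒮 (· ≤ ·) := ⟨by
    rintro ⟨s, hs⟩ ⟨t, ht⟩
    obtain ⟨u, hu, h⟩ := hdir {s, t} (by
      intro x hx
      simp only [Finset.coe_insert, Finset.coe_singleton, Set.mem_insert_iff,
        Set.mem_singleton_iff] at hx
      rcases hx with rfl | rfl <;> assumption)
    exact ⟨⟨u, hu⟩, h s (by simp), h t (by simp)⟩⟩
  rw [TopologicalSpace.tendsto_nhds_generateFrom_iff]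
  rintro B ⟨𝒱, hop, rfl⟩ hLB
  obtain ⟨hL1, hL2⟩ := hLB
  have key : ∀ V ∈ 𝒱, ∃ s ∈ 𝒮, (s.1 ∩ V).Nonempty := by
    intro V hV
    obtain ⟨x, hx1, hx2⟩ := hL2 V hV
    rw [hL] at hx1
    obtain ⟨y, hy1, hy2⟩ := mem_closure_iff.mp hx1 V (hop V hV) hx2
    obtain ⟨s, hs, hys⟩ := mem_iUnion₂.mp hy2
    exact ⟨s, hs, y, hys, hy1⟩
  choose g hg1 hg2 using key
  have hsub : ↑(𝒱.attach.image fun V => g V.1 V.2) ⊆ 𝒮 := by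
    intro x hx
    simp only [Finset.coe_image, Set.mem_image, Finset.mem_coe,
      Finset.mem_attach, true_and] at hx
    obtain ⟨V, -, rfl⟩ := hx
    exact hg1 V.1 V.2
  obtain ⟨s₀, hs₀, hbound⟩ := hdir _ hsub
  refine mem_atTop_sets.mpr ⟨⟨s₀, hs₀⟩, fun b hb => ?_⟩
  have hble : s₀.1 ⊆ (b : HypF X).1 := hb
  constructor
  · intro x hx
    apply hL1
    rw [hL]
    exact subset_closure (mem_iUnion₂.mpr ⟨(b : HypF X), b.2, hx⟩)
  · intro V hV
    obtain ⟨y, hy1, hy2⟩ := hg2 V hV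
    have : g V hV ≤ s₀ := hbound _ (Finset.mem_image.mpr ⟨⟨V, hV⟩, Finset.mem_attach _ _, rfl⟩)
    exact ⟨y, hble (this hy1), hy2⟩
end

section
/- Let X be an infinite Hausdorff space, f a continuous selection for F(X) such that p = f(X) is a butterfly point of X, and B a local base at p in X such that f((X \ B) ∪ {p}) = p for every B ∈ B. Then X \ {p} contains a sequence convergent to p. -/
open Set Filter Topology

variable {X : Type*} [TopologicalSpace X]

section Aux

open TopologicalSpace

variable {X : Type*} [TopologicalSpace X]

/-- The generating family of the Vietoris topology on `HypF X`. -/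
def hypGen (X : Type*) [TopologicalSpace X] : Set (Set (HypF X)) :=
  {B : Set (HypF X) | ∃ 𝒱 : Finset (Set X), (∀ V ∈ 𝒱, IsOpen V) ∧
      B = {S : HypF X | S.1 ⊆ (⋃ V ∈ 𝒱, V) ∧ ∀ V ∈ 𝒱, (S.1 ∩ V).Nonempty}}

lemma hypF_genOpen {U : Set (HypF X)} (h : IsOpen U) :
    TopologicalSpace.GenerateOpen (hypGen X) U := h

lemma genOpen_finite_sInter {α : Type*} {g : Set (Set α)} {U : Set α}
    (hU : TopologicalSpace.GenerateOpen g U) :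
    ∀ x ∈ U, ∃ t : Set (Set α), t.Finite ∧ t ⊆ g ∧ x ∈ ⋂₀ t ∧ ⋂₀ t ⊆ U := by
  induction hU with
  | basic u hu =>
      intro x hx
      exact ⟨{u}, finite_singleton u, singleton_subset_iff.2 hu, by simpa using hx, by simp⟩
  | univ =>
      intro x _
      exact ⟨∅, finite_empty, empty_subset _, by simp, by simp⟩
  | inter u v hu hv ihu ihv =>
      intro x hx
      obtain ⟨t1, h1f, h1g, h1x, h1s⟩ := ihu x hx.1
      obtain ⟨t2, h2f, h2g, h2x, h2s⟩ := ihv x hx.2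
      refine ⟨t1 ∪ t2, h1f.union h2f, union_subset h1g h2g, ?_, ?_⟩
      · rw [sInter_union]; exact ⟨h1x, h2x⟩
      · rw [sInter_union]; exact fun y hy => ⟨h1s hy.1, h2s hy.2⟩
  | sUnion S hS ih =>
      intro x hx
      obtain ⟨s, hsS, hxs⟩ := hx
      obtain ⟨t, h1, h2, h3, h4⟩ := ih s hsS x hxs
      exact ⟨t, h1, h2, h3, h4.trans (subset_sUnion_of_mem hsS)⟩

/-- Explicit constructor for `HypF`. -/
def HypF.mk' {X : Type*} [TopologicalSpace X] (S : Set X) (h1 : S.Nonempty)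
    (h2 : IsClosed S) : HypF X := ⟨S, h1, h2⟩

@[simp] lemma HypF.mk'_val {X : Type*} [TopologicalSpace X] (S : Set X) (h1 h2) :
    (HypF.mk' S h1 h2).1 = S := rfl

open Classical in
/-- A total version of the selection for arbitrary sets. -/
noncomputable def FFsel [Nonempty X] (f : HypF X → X) (S : Set X) : X :=
  if h : S.Nonempty ∧ IsClosed S then f (HypF.mk' S h.1 h.2)
  else f (HypF.mk' univ univ_nonempty isClosed_univ)

lemma FFsel_eq [Nonempty X] (f : HypF X → X) {S : Set X} (h1 : S.Nonempty) (h2 : IsClosed S) :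
    FFsel f S = f (HypF.mk' S h1 h2) := by
  unfold FFsel
  exact dif_pos ⟨h1, h2⟩

lemma FFsel_mem [Nonempty X] {f : HypF X → X} (hf : IsContinuousSelection f)
    {S : Set X} (h1 : S.Nonempty) (h2 : IsClosed S) : FFsel f S ∈ S := by
  rw [FFsel_eq f h1 h2]; exact hf.2 (HypF.mk' S h1 h2)

/-- f of an increasing sequence of closed sets converges to f of the closure of the union. -/
lemma factB [Nonempty X] {f : HypF X → X} (hf : Continuous f) (S : ℕ → Set X)
    (hmono : Monotone S) (hcl : ∀ n, IsClosed (S n)) (hne : ∀ n, (S n).Nonempty) :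
    Tendsto (fun n => FFsel f (S n)) atTop (𝓝 (FFsel f (closure (⋃ n, S n)))) := by
  rw [tendsto_nhds]
  intro W hW hmem
  set T : Set X := closure (⋃ n, S n) with hT
  have hTne : T.Nonempty := (hne 0).mono ((subset_iUnion S 0).trans subset_closure)
  have hTcl : IsClosed T := isClosed_closure
  have hTm : (HypF.mk' T hTne hTcl) ∈ f ⁻¹' W := by
    rw [mem_preimage]; rw [FFsel_eq f hTne hTcl] at hmem; exact hmem
  have hopen : TopologicalSpace.GenerateOpen (hypGen X) (f ⁻¹' W) :=
    hypF_genOpen (hW.preimage hf)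
  obtain ⟨t, htf, htg, hxt, hts⟩ := genOpen_finite_sInter hopen _ hTm
  have key : ∀ u ∈ t, ∀ᶠ n in atTop, (HypF.mk' (S n) (hne n) (hcl n)) ∈ u := by
    intro u hu
    obtain ⟨𝒱, h𝒱, rfl⟩ := htg hu
    have hTu : T ⊆ (⋃ V ∈ 𝒱, V) ∧ ∀ V ∈ 𝒱, (T ∩ V).Nonempty := mem_sInter.mp hxt _ hu
    have hhit : ∀ᶠ n in atTop, ∀ V ∈ 𝒱, ((S n) ∩ V).Nonempty := by
      rw [eventually_all_finset]
      intro V hV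
      obtain ⟨x, hxT, hxV⟩ := hTu.2 V hV
      obtain ⟨y, hyV, hyU⟩ := mem_closure_iff.mp hxT V (h𝒱 V hV) hxV
      obtain ⟨n0, hn0⟩ := mem_iUnion.mp hyU
      exact eventually_atTop.2 ⟨n0, fun n hn => ⟨y, hmono hn hn0, hyV⟩⟩
    filter_upwards [hhit] with n hn
    exact ⟨((subset_iUnion S n).trans subset_closure).trans hTu.1, hn⟩
  have hev : ∀ᶠ n in atTop, ∀ u ∈ t, (HypF.mk' (S n) (hne n) (hcl n)) ∈ u :=
    (htf.eventually_all).mpr key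
  filter_upwards [hev] with n hn
  rw [mem_preimage] at *
  rw [FFsel_eq f (hne n) (hcl n)]
  exact hts (mem_sInter.mpr hn)

/-- Continuity of `x ↦ f (D ∪ {x})`. -/
lemma contFF_insert [Nonempty X] [T1Space X] {f : HypF X → X} (hf : Continuous f)
    {D : Set X} (hD : IsClosed D) :
    Continuous (fun x : X => FFsel f (D ∪ {x})) := by
  have hcl : ∀ x : X, IsClosed (D ∪ {x}) := fun x => hD.union isClosed_singleton
  have hne : ∀ x : X, (D ∪ {x}).Nonempty := fun x => ⟨x, Or.inr rfl⟩
  have hψ : Continuous (fun x : X => (HypF.mk' (D ∪ {x}) (hne x) (hcl x))) := by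
    rw [continuous_def]
    intro s hs
    have hs' : TopologicalSpace.GenerateOpen (hypGen X) s := hypF_genOpen hs
    clear hs
    induction hs' with
    | basic u hu =>
        obtain ⟨𝒱, h𝒱, rfl⟩ := hu
        by_cases hDU : D ⊆ ⋃ V ∈ 𝒱, V
        · have hEq : (fun x : X => (HypF.mk' (D ∪ {x}) (hne x) (hcl x))) ⁻¹'
              {S : HypF X | S.1 ⊆ (⋃ V ∈ 𝒱, V) ∧ ∀ V ∈ 𝒱, (S.1 ∩ V).Nonempty} =
              (⋃ V ∈ 𝒱, V) ∩ ⋂ V ∈ 𝒱, ({y : X | (D ∩ V).Nonempty} ∪ V) := by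
            ext x
            simp only [mem_preimage, mem_setOf_eq, mem_inter_iff, mem_iInter, mem_union, HypF.mk'_val]
            constructor
            · rintro ⟨hsub, hhit⟩
              refine ⟨hsub (Or.inr rfl), fun V hV => ?_⟩
              obtain ⟨y, hy1, hy2⟩ := hhit V hV
              rcases hy1 with hyD | hyx
              · exact Or.inl ⟨y, hyD, hy2⟩
              · rw [mem_singleton_iff] at hyx; subst hyx; exact Or.inr hy2
            · rintro ⟨hxU, hall⟩
              refine ⟨union_subset hDU (singleton_subset_iff.2 hxU), fun V hV => ?_⟩
              rcases hall V hV with hP | hxV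
              · obtain ⟨y, hyD, hyV⟩ := hP; exact ⟨y, Or.inl hyD, hyV⟩
              · exact ⟨x, Or.inr rfl, hxV⟩
          rw [hEq]
          refine (isOpen_biUnion fun V hV => h𝒱 V hV).inter
            (isOpen_biInter_finset fun V hV => ?_)
          by_cases hP : (D ∩ V).Nonempty
          · simp only [hP, setOf_true, univ_union]; exact isOpen_univ
          · simp only [hP, setOf_false, empty_union]; exact h𝒱 V hV
        · have hEq : (fun x : X => (HypF.mk' (D ∪ {x}) (hne x) (hcl x))) ⁻¹'
              {S : HypF X | S.1 ⊆ (⋃ V ∈ 𝒱, V) ∧ ∀ V ∈ 𝒱, (S.1 ∩ V).Nonempty} = ∅ := by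
            ext x
            simp only [mem_preimage, mem_setOf_eq, mem_empty_iff_false, iff_false, HypF.mk'_val]
            rintro ⟨hsub, -⟩
            exact hDU (fun y hy => hsub (Or.inl hy))
          rw [hEq]; exact isOpen_empty
    | univ => simp
    | inter u v hu hv ihu ihv => rw [preimage_inter]; exact ihu.inter ihv
    | sUnion S hS ih => rw [preimage_sUnion]; exact isOpen_biUnion fun s hs => ih s hs
  have : Continuous (fun x : X => f (HypF.mk' (D ∪ {x}) (hne x) (hcl x))) := hf.comp hψ
  exact this.congr fun x => (FFsel_eq f (hne x) (hcl x)).symm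

/-- The recursive construction of finite sets of chosen points. -/
def buildE {X : Type*} (pick : ℕ → Set X → X) : ℕ → Set X
  | 0 => ∅
  | n + 1 => insert (pick n (buildE pick n)) (buildE pick n)

end Aux
/-- If `f` is a continuous selection for `F(X)`, `p = f(X)` is a
butterfly point, and `ℬ` is a local base at `p` with `f((X \ B) ∪ {p}) = p`
for every `B ∈ ℬ`, then `X \ {p}` contains a sequence convergent to `p`. -/
theorem statement9 (X : Type*) [TopologicalSpace X] [T2Space X] [Infinite X]
    (f : HypF X → X) (hf : IsContinuousSelection f)
    (p : X) (hp : f (HypF.top X) = p) (hbf : IsButterflyPoint p)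
    (ℬ : Set (Set X)) (hbase : IsLocalBaseAt p ℬ)
    (hB : ∀ B ∈ ℬ, ∀ h : (Bᶜ ∪ {p} : Set X).Nonempty ∧ IsClosed (Bᶜ ∪ {p} : Set X),
      f ⟨Bᶜ ∪ {p}, h⟩ = p) :
    ∃ x : ℕ → X, (∀ n, x n ∈ ({p}ᶜ : Set X)) ∧ Tendsto x atTop (𝓝 p) := by
  classical
  haveI : Nonempty X := inferInstance
  obtain ⟨F, G, hFc, hGc, hFG⟩ := hbf
  have hpFG : p ∈ closure (F \ {p}) ∩ closure (G \ {p}) := by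
    rw [hFG]; exact rfl
  have hpF : p ∈ closure (F \ {p}) := hpFG.1
  have hpG : p ∈ closure (G \ {p}) := hpFG.2
  -- `FFsel f` of the basic sets `Bᶜ ∪ {p}` is `p`
  have FFhB : ∀ B ∈ ℬ, FFsel f (Bᶜ ∪ {p}) = p := by
    intro B hb
    have hcl : IsClosed (Bᶜ ∪ {p} : Set X) :=
      ((hbase.1 B hb).1.isClosed_compl).union isClosed_singleton
    have hne : (Bᶜ ∪ {p} : Set X).Nonempty := ⟨p, Or.inr rfl⟩
    rw [FFsel_eq f hne hcl]
    exact hB B hb ⟨hne, hcl⟩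
  by_cases htrap : ∃ B ∈ ℬ, ∀ C : Set X, IsClosed C → p ∉ C → FFsel f (Bᶜ ∪ {p} ∪ C) = p
  · -- TRAP case: use the butterfly wings
    obtain ⟨B0, hB0, htr⟩ := htrap
    have hB0o : IsOpen B0 := (hbase.1 B0 hB0).1
    have hB0p : p ∈ B0 := (hbase.1 B0 hB0).2
    have NW : ∀ (n : ℕ) (E : Set X), E.Finite → p ∉ E →
        ∃ x : X, x ∈ (if n % 2 = 0 then F else G) \ {p} ∧
          FFsel f (B0ᶜ ∪ E ∪ {x}) = x := by
      intro n E hEf hpE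
      set D : Set X := B0ᶜ ∪ E with hD
      have hDcl : IsClosed D := (hB0o.isClosed_compl).union hEf.isClosed
      have hcont : Continuous (fun x : X => FFsel f (D ∪ {x})) := contFF_insert hf.1 hDcl
      have hvalp : FFsel f (D ∪ {p}) = p := by
        have hset : D ∪ {p} = B0ᶜ ∪ {p} ∪ E := by
          rw [hD]; ext y; simp only [mem_union, mem_singleton_iff]; tauto
        rw [hset]
        exact htr E hEf.isClosed hpE
      set W : Set X := B0 ∩ Eᶜ with hW
      have hWo : IsOpen W := hB0o.inter hEf.isClosed.isOpen_compl
      have hpW : p ∈ W := ⟨hB0p, hpE⟩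
      have hNo : IsOpen ((fun x : X => FFsel f (D ∪ {x})) ⁻¹' W) := hWo.preimage hcont
      have hpN : p ∈ (fun x : X => FFsel f (D ∪ {x})) ⁻¹' W := by
        rw [mem_preimage, hvalp]; exact hpW
      have hwing : p ∈ closure ((if n % 2 = 0 then F else G) \ {p}) := by
        by_cases h : n % 2 = 0
        · rw [if_pos h]; exact hpF
        · rw [if_neg h]; exact hpG
      obtain ⟨x, hxN, hxw⟩ := mem_closure_iff.mp hwing _ hNo hpN
      refine ⟨x, hxw, ?_⟩
      have hxW : FFsel f (D ∪ {x}) ∈ W := hxN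
      have hmem : FFsel f (D ∪ {x}) ∈ D ∪ {x} :=
        FFsel_mem hf ⟨x, Or.inr rfl⟩ (hDcl.union isClosed_singleton)
      rcases hmem with hmD | hx1
      · rcases hmD with h1 | h2
        · exact absurd hxW.1 h1
        · exact absurd h2 hxW.2
      · exact hx1
    choose! zf hz1 hz2 using NW
    set Es : ℕ → Set X := buildE zf with hEs
    set z : ℕ → X := fun n => zf n (Es n) with hz
    have hEstep : ∀ n, Es (n + 1) = insert (z n) (Es n) := by
      intro n; rw [hEs, hz]; rfl
    have hE0 : Es 0 = ∅ := rfl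
    have hEfin : ∀ n, (Es n).Finite := by
      intro n; induction n with
      | zero => rw [hE0]; exact finite_empty
      | succ k ih => rw [hEstep k]; exact ih.insert _
    have pE : ∀ n, p ∉ Es n := by
      intro n; induction n with
      | zero => rw [hE0]; exact notMem_empty p
      | succ k ih =>
          rw [hEstep k, mem_insert_iff]
          rintro (h | h)
          · exact (hz1 k (Es k) (hEfin k) ih).2 h.symm
          · exact ih h
    have hzwing : ∀ n, z n ∈ (if n % 2 = 0 then F else G) \ {p} :=
      fun n => hz1 n (Es n) (hEfin n) (pE n)
    have hznp : ∀ n, z n ≠ p := fun n => (hzwing n).2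
    set S : ℕ → Set X := fun n => B0ᶜ ∪ Es (n + 1) with hS
    have hScl : ∀ n, IsClosed (S n) := fun n =>
      (hB0o.isClosed_compl).union (hEfin (n + 1)).isClosed
    have hSne : ∀ n, (S n).Nonempty := by
      intro n
      exact ⟨z n, Or.inr (by rw [hEstep n]; exact mem_insert _ _)⟩
    have hSmono : Monotone S := by
      apply monotone_nat_of_le_succ
      intro n
      apply union_subset_union_right
      rw [hEstep (n + 1)]
      exact subset_insert _ _
    have hfS : ∀ n, FFsel f (S n) = z n := by
      intro n
      have hset : S n = B0ᶜ ∪ Es n ∪ {z n} := by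
        rw [hS]
        simp only
        rw [hEstep n]
        ext y
        simp only [mem_union, mem_insert_iff, mem_singleton_iff]
        tauto
      rw [hset]
      exact hz2 n (Es n) (hEfin n) (pE n)
    have hTend := factB hf.1 S hSmono hScl hSne
    rw [show (fun n => FFsel f (S n)) = z from funext hfS] at hTend
    set q : X := FFsel f (closure (⋃ n, S n)) with hq
    have h2k : Tendsto (fun k : ℕ => 2 * k) atTop atTop :=
      tendsto_atTop_mono (fun n => by show n ≤ _; omega) tendsto_id
    have h2k1 : Tendsto (fun k : ℕ => 2 * k + 1) atTop atTop :=
      tendsto_atTop_mono (fun n => by show n ≤ _; omega) tendsto_id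
    have hqF : q ∈ closure (F \ {p}) := by
      refine mem_closure_of_tendsto (hTend.comp h2k) (Eventually.of_forall fun k => ?_)
      have := hzwing (2 * k)
      rw [if_pos (by omega : (2 * k) % 2 = 0)] at this
      exact this
    have hqG : q ∈ closure (G \ {p}) := by
      refine mem_closure_of_tendsto (hTend.comp h2k1) (Eventually.of_forall fun k => ?_)
      have := hzwing (2 * k + 1)
      rw [if_neg (by omega : ¬ (2 * k + 1) % 2 = 0)] at this
      exact this
    have hqp : q = p := by
      have : q ∈ closure (F \ {p}) ∩ closure (G \ {p}) := ⟨hqF, hqG⟩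
      rw [hFG] at this
      exact this
    refine ⟨z, fun n => by simpa using hznp n, ?_⟩
    rw [← hqp]
    exact hTend
  · -- NO-TRAP case
    push_neg at htrap
    choose! Cf hCcl hCp hCne using htrap
    have hstep : ∀ B ∈ ℬ, ∃ B' ∈ ℬ, B' ⊆ B ∩ (Cf B)ᶜ := fun B hb =>
      hbase.2 (B ∩ (Cf B)ᶜ)
        ((hbase.1 B hb).1.inter (hCcl B hb).isOpen_compl)
        ⟨(hbase.1 B hb).2, hCp B hb⟩
    choose! nxt hnxt1 hnxt2 using hstep
    obtain ⟨Binit, hBinit, -⟩ := hbase.2 univ isOpen_univ (mem_univ p)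
    set Bs : ℕ → Set X := fun n => Nat.rec Binit (fun _ Bk => nxt Bk) n with hBsdef
    have hBss : ∀ n, Bs (n + 1) = nxt (Bs n) := fun n => rfl
    have hBmem : ∀ n, Bs n ∈ ℬ := by
      intro n; induction n with
      | zero => exact hBinit
      | succ k ih => rw [hBss k]; exact hnxt1 _ ih
    have hBsub : ∀ n, Bs (n + 1) ⊆ Bs n ∩ (Cf (Bs n))ᶜ := by
      intro n; rw [hBss n]; exact hnxt2 _ (hBmem n)
    set R : ℕ → Set X :=
      fun m => (Bs (m / 2))ᶜ ∪ {p} ∪ (if m % 2 = 1 then Cf (Bs (m / 2)) else ∅) with hR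
    have hRcl : ∀ m, IsClosed (R m) := by
      intro m
      refine (((hbase.1 _ (hBmem (m / 2))).1.isClosed_compl).union isClosed_singleton).union ?_
      by_cases h : m % 2 = 1
      · rw [if_pos h]; exact hCcl _ (hBmem _)
      · rw [if_neg h]; exact isClosed_empty
    have hRne : ∀ m, (R m).Nonempty := fun m => ⟨p, Or.inl (Or.inr rfl)⟩
    have hRm : ∀ m, R m =
        (Bs (m / 2))ᶜ ∪ {p} ∪ (if m % 2 = 1 then Cf (Bs (m / 2)) else ∅) := fun m => rfl
    have hRmono : Monotone R := by
      apply monotone_nat_of_le_succ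
      intro m
      rcases Nat.even_or_odd m with he | ho
      · have hm : m % 2 = 0 := Nat.even_iff.mp he
        rw [hRm m, hRm (m + 1), (by omega : (m + 1) / 2 = m / 2),
          if_neg (by omega : ¬ m % 2 = 1), if_pos (by omega : (m + 1) % 2 = 1)]
        exact union_subset_union_right _ (empty_subset _)
      · have hm : m % 2 = 1 := Nat.odd_iff.mp ho
        rw [hRm m, hRm (m + 1), (by omega : (m + 1) / 2 = m / 2 + 1),
          if_pos hm, if_neg (by omega : ¬ (m + 1) % 2 = 1)]
        rintro x ((hx | hx) | hx)
        · exact Or.inl (Or.inl fun hxx => hx (hBsub (m / 2) hxx).1)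
        · exact Or.inl (Or.inr hx)
        · exact Or.inl (Or.inl fun hxx => (hBsub (m / 2) hxx).2 hx)
    have hTend := factB hf.1 R hRmono hRcl hRne
    set q : X := FFsel f (closure (⋃ m, R m)) with hq
    have h2k : Tendsto (fun k : ℕ => 2 * k) atTop atTop :=
      tendsto_atTop_mono (fun n => by show n ≤ _; omega) tendsto_id
    have h2k1 : Tendsto (fun k : ℕ => 2 * k + 1) atTop atTop :=
      tendsto_atTop_mono (fun n => by show n ≤ _; omega) tendsto_id
    have heven : ∀ k, FFsel f (R (2 * k)) = p := by
      intro k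
      have hset : R (2 * k) = (Bs k)ᶜ ∪ {p} := by
        rw [hRm (2 * k), (by omega : 2 * k / 2 = k),
          if_neg (by omega : ¬ (2 * k) % 2 = 1), union_empty]
      rw [hset]
      exact FFhB (Bs k) (hBmem k)
    have hodd : ∀ k, FFsel f (R (2 * k + 1)) ≠ p := by
      intro k
      have hset : R (2 * k + 1) = (Bs k)ᶜ ∪ {p} ∪ Cf (Bs k) := by
        rw [hRm (2 * k + 1), (by omega : (2 * k + 1) / 2 = k),
          if_pos (by omega : (2 * k + 1) % 2 = 1)]
      rw [hset]
      exact hCne (Bs k) (hBmem k)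
    have hqp : q = p := by
      have h1 : Tendsto (fun k : ℕ => FFsel f (R (2 * k))) atTop (𝓝 q) := hTend.comp h2k
      have h2 : Tendsto (fun k : ℕ => FFsel f (R (2 * k))) atTop (𝓝 p) := by
        rw [show (fun k : ℕ => FFsel f (R (2 * k))) = fun _ => p from funext heven]
        exact tendsto_const_nhds
      exact tendsto_nhds_unique h1 h2
    refine ⟨fun k => FFsel f (R (2 * k + 1)), fun k => by simpa using hodd k, ?_⟩
    have := hTend.comp h2k1
    rwa [hqp] at this
end

section
/- Let X be a Hausdorff space which admits a continuous weak selection σ and is totally disconnected at a point p ∈ X. Let Δ_p be one of the intervals (←, p)_{≤σ} = {x ∈ X : x <_σ p} or (p, →)_{≤σ} = {x ∈ X : p <_σ x}. If p is the limit of a sequence of points of Δ_p, then {p} is a countable intersection of clopen subsets of the subspace cl(Δ_p). -/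
open Set Filter Topology

variable {X : Type*} [TopologicalSpace X]

/-! A continuous weak selection on a Hausdorff space makes `<_σ` an open subset of `X × X`,
and its reverse is open as well, so both intervals are handled by one argument about an open,
asymmetric relation `<` that is total on distinct points. Pick clopen sets `C n ∋ p` missing
`x n`. Inside `C n`, `{y | x n < y}` is the complement of the open set `{y | y < x n}`, hence
clopen. A point `q ≠ p` of `cl Δ` satisfies `q < p`, so `q < x n` for large `n` by openness:
these clopen sets cut out exactly `{p}`. -/

lemma pairF_comm {α : Type*} (a b : α) : pairF a b = pairF b a :=
  Subtype.ext (Set.pair_comm a b)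

lemma continuous_pairF : Continuous (fun q : X × X => pairF q.1 q.2) := by
  rw [continuous_generateFrom_iff]
  rintro B ⟨𝒱, h𝒱, rfl⟩
  have hpre : (fun q : X × X => pairF q.1 q.2) ⁻¹'
      {S : HypF2 X | S.1 ⊆ (⋃ V ∈ 𝒱, V) ∧ ∀ V ∈ 𝒱, (S.1 ∩ V).Nonempty}
      = ((⋃ V ∈ 𝒱, V) ×ˢ (⋃ V ∈ 𝒱, V)) ∩ ⋂ V ∈ 𝒱, (V ×ˢ univ ∪ univ ×ˢ V) := by
    ext ⟨u, v⟩
    change (({u, v} : Set X) ⊆ _ ∧ ∀ V ∈ 𝒱, (({u, v} : Set X) ∩ V).Nonempty) ↔ _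
    simp only [insert_subset_iff, singleton_subset_iff, Set.Nonempty, mem_inter_iff,
      mem_insert_iff, mem_singleton_iff, or_and_right, exists_or, exists_eq_left, mem_prod,
      mem_iInter, mem_union, mem_univ, and_true, true_and]
  have hU : IsOpen (⋃ V ∈ 𝒱, V) := isOpen_biUnion h𝒱
  rw [hpre]
  exact (hU.prod hU).inter <| isOpen_biInter_finset fun V hV =>
    ((h𝒱 V hV).prod isOpen_univ).union (isOpen_univ.prod (h𝒱 V hV))

section WeakSelection

variable {α : Type*} {σ : HypF2 α → α}

lemma IsWeakSelection.pairF_eq_or (hσ : IsWeakSelection σ) (a b : α) :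
    σ (pairF a b) = a ∨ σ (pairF a b) = b :=
  hσ (pairF a b)

lemma IsWeakSelection.wsLT_iff (hσ : IsWeakSelection σ) {a b : α} :
    wsLT σ a b ↔ σ (pairF a b) ≠ b := by
  refine ⟨fun ⟨hab, hne⟩ h => hne (hab.symm.trans h), fun h => ?_⟩
  have ha : σ (pairF a b) = a := (hσ.pairF_eq_or a b).resolve_right h
  exact ⟨ha, fun hab => h (hab ▸ ha)⟩

lemma wsLT_asymm {a b : α} (h : wsLT σ a b) : ¬ wsLT σ b a := fun h' =>
  h.2 (h.1.symm.trans (pairF_comm a b ▸ h'.1))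

lemma IsWeakSelection.wsLT_or_wsLT (hσ : IsWeakSelection σ) {a b : α} (hab : a ≠ b) :
    wsLT σ a b ∨ wsLT σ b a := by
  rcases hσ.pairF_eq_or a b with h | h
  · exact Or.inl ⟨h, hab⟩
  · exact Or.inr ⟨pairF_comm a b ▸ h, hab.symm⟩

end WeakSelection

lemma isOpen_setOf_wsLT [T2Space X] {σ : HypF2 X → X} (hσ : IsWeakSelection σ)
    (hσc : Continuous σ) : IsOpen {q : X × X | wsLT σ q.1 q.2} := by
  simp only [hσ.wsLT_iff]
  exact (isClosed_eq (hσc.comp continuous_pairF) continuous_snd).isOpen_compl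

lemma TotallyDisconnectedAt.exists_isClopen {p : X} (h : TotallyDisconnectedAt p) {y : X}
    (hy : y ≠ p) : ∃ C, IsClopen C ∧ p ∈ C ∧ y ∉ C := by
  obtain ⟨𝒞, h𝒞, hp⟩ := h
  have hy𝒞 : y ∉ ⋂₀ 𝒞 := by rwa [hp, mem_singleton_iff]
  obtain ⟨C, hC, hyC⟩ := not_forall₂.mp hy𝒞
  exact ⟨C, h𝒞 C hC, (hp ▸ mem_singleton p : p ∈ ⋂₀ 𝒞) C hC, hyC⟩

section OpenRelation

variable {r : X → X → Prop} (hr : IsOpen {q : X × X | r q.1 q.2})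
  (hasymm : ∀ {a b}, r a b → ¬ r b a) (htotal : ∀ {a b}, a ≠ b → r a b ∨ r b a)
include hr

lemma isOpen_setOf_rel_left (a : X) : IsOpen {y | r y a} :=
  hr.preimage (continuous_id.prodMk continuous_const)

lemma isOpen_setOf_rel_right (a : X) : IsOpen {y | r a y} :=
  hr.preimage (continuous_const.prodMk continuous_id)

include hasymm htotal

lemma rel_of_mem_closure {p q : X} (hq : q ∈ closure {y | r y p}) (hqp : q ≠ p) : r q p := by
  have hsub : closure {y | r y p} ⊆ {y | r p y}ᶜ :=
    closure_minimal (fun _ hy => hasymm hy) (isOpen_setOf_rel_right hr p).isClosed_compl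
  exact (htotal hqp).resolve_right (hsub hq)

lemma isClopen_setOf_rel_inter {a : X} {C : Set X} (hC : IsClopen C) (ha : a ∉ C) :
    IsClopen ({y | r a y} ∩ C) := by
  have hdiff : {y | r a y} ∩ C = C \ {y | r y a} := by
    ext y
    refine ⟨fun ⟨hay, hy⟩ => ⟨hy, hasymm hay⟩, fun ⟨hy, hya⟩ => ⟨?_, hy⟩⟩
    exact (htotal (ne_of_mem_of_not_mem hy ha).symm).resolve_right hya
  refine ⟨?_, (isOpen_setOf_rel_right hr a).inter hC.isOpen⟩
  rw [hdiff]
  exact hC.isClosed.sdiff (isOpen_setOf_rel_left hr a)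

lemma eq_of_mem_closure_of_forall_rel {p q : X} {x : ℕ → X} (hlim : Tendsto x atTop (𝓝 p))
    (hq : q ∈ closure {y | r y p}) (hxq : ∀ n, r (x n) q) : q = p := by
  by_contra hqp
  have hev : ∀ᶠ n in atTop, r q (x n) :=
    hlim.eventually ((isOpen_setOf_rel_right hr q).mem_nhds (rel_of_mem_closure hr hasymm
      htotal hq hqp))
  obtain ⟨n, hn⟩ := hev.exists
  exact hasymm hn (hxq n)

theorem exists_isClopen_iInter_eq_singleton {p : X} (htd : TotallyDisconnectedAt p)
    {x : ℕ → X} (hx : ∀ n, r (x n) p) (hlim : Tendsto x atTop (𝓝 p))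
    (hp : p ∈ closure {y | r y p}) :
    ∃ H : ℕ → Set (closure {y | r y p}),
      (∀ n, IsClopen (H n)) ∧ (⋂ n, H n) = {(⟨p, hp⟩ : closure {y | r y p})} := by
  have hxp (n : ℕ) : x n ≠ p := fun h => hasymm (hx n) (h ▸ hx n)
  choose C hC hpC hxC using fun n => htd.exists_isClopen (hxp n)
  refine ⟨fun n => Subtype.val ⁻¹' ({y | r (x n) y} ∩ C n), fun n =>
    (isClopen_setOf_rel_inter hr hasymm htotal (hC n) (hxC n)).preimage continuous_subtype_val,
    ?_⟩
  ext q
  simp only [mem_iInter, mem_preimage, mem_inter_iff, mem_ofPred_eq, mem_singleton_iff]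
  refine ⟨fun hq => Subtype.ext ?_, fun hq => hq ▸ fun n => ⟨hx n, hpC n⟩⟩
  exact eq_of_mem_closure_of_forall_rel hr hasymm htotal hlim q.2 fun n => (hq n).1

end OpenRelation

/-- If `X` has a continuous weak selection `σ`, is totally
disconnected at `p`, `Δ_p` is one of the intervals `(←, p)_{≤σ}` or
`(p, →)_{≤σ}`, and `p` is the limit of a sequence of points of `Δ_p`, then
`{p}` is a countable intersection of clopen subsets of `cl Δ_p`. -/
theorem statement10 (X : Type*) [TopologicalSpace X] [T2Space X]
    (σ : HypF2 X → X) (hσ : IsWeakSelection σ) (hσc : Continuous σ)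
    (p : X) (htd : TotallyDisconnectedAt p)
    (Δ : Set X) (hΔ : Δ = {x | wsLT σ x p} ∨ Δ = {x | wsLT σ p x})
    (x : ℕ → X) (hx : ∀ n, x n ∈ Δ) (hlim : Tendsto x atTop (𝓝 p)) :
    ∀ hp : p ∈ closure Δ, ∃ H : ℕ → Set (closure Δ),
      (∀ n, IsClopen (H n)) ∧ (⋂ n, H n) = {(⟨p, hp⟩ : closure Δ)} := by
  have hr : IsOpen {q : X × X | wsLT σ q.1 q.2} := isOpen_setOf_wsLT hσ hσc
  rcases hΔ with rfl | rfl
  · exact exists_isClopen_iInter_eq_singleton hr wsLT_asymm hσ.wsLT_or_wsLT htd hx hlim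
  · exact exists_isClopen_iInter_eq_singleton (r := flip (wsLT σ))
      (hr.preimage continuous_swap) wsLT_asymm (fun hab => hσ.wsLT_or_wsLT hab.symm)
      htd hx hlim
end

section
/- Let X be a Hausdorff space, T, Z ∈ F(X) nonempty closed subsets of X with Z connected, and f a continuous selection for F(X). If q = f(T ∪ D) for some nonempty closed subset D of Z, then f(T ∪ S) belongs to the connected component C[q] of q in X for every nonempty closed subset S of Z. -/
open Set Filter Topology

variable {X : Type*} [TopologicalSpace X]

/-!
The map `A ↦ f(T ∪ A)` is continuous on the hyperspace, so it suffices that the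
nonempty closed subsets of a connected set `Z` form a connected subset of `F(X)`.
Every finite subset of `Z` is reached from a singleton by adjoining points of `Z`
one at a time, each step moving inside a continuous image of `Z`; so the finite
subsets of `Z` lie in one connected component, and they are dense among the closed
subsets of `Z`.
-/

namespace HypF

lemma isOpen_setOf_subset {W : Set X} (hW : IsOpen W) : IsOpen {S : HypF X | S.1 ⊆ W} := by
  refine TopologicalSpace.GenerateOpen.basic _ ⟨{W}, by simpa using hW, ?_⟩
  ext S
  simpa using fun h => S.2.1.mono (subset_inter_iff.2 ⟨subset_rfl, h⟩)

lemma isOpen_setOf_inter_nonempty {V : Set X} (hV : IsOpen V) :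
    IsOpen {S : HypF X | (S.1 ∩ V).Nonempty} := by
  classical
  refine TopologicalSpace.GenerateOpen.basic _ ⟨{V, univ}, by simpa using hV, ?_⟩
  ext S
  simp [S.2.1]

lemma continuous_of_isOpen_preimage {Y : Type*} [TopologicalSpace Y] {g : Y → HypF X}
    (hsub : ∀ W, IsOpen W → IsOpen (g ⁻¹' {S | S.1 ⊆ W}))
    (hmeet : ∀ V, IsOpen V → IsOpen (g ⁻¹' {S | (S.1 ∩ V).Nonempty})) : Continuous g := by
  refine continuous_generateFrom_iff.2 ?_
  rintro _ ⟨𝒱, h𝒱, rfl⟩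
  have hbasic : {S : HypF X | S.1 ⊆ (⋃ V ∈ 𝒱, V) ∧ ∀ V ∈ 𝒱, (S.1 ∩ V).Nonempty} =
      {S | S.1 ⊆ ⋃ V ∈ 𝒱, V} ∩ ⋂ V ∈ 𝒱, {S | (S.1 ∩ V).Nonempty} := by
    ext S; simp
  rw [hbasic, preimage_inter, preimage_iInter₂]
  exact (hsub _ (isOpen_biUnion h𝒱)).inter (isOpen_biInter_finset fun V hV => hmeet V (h𝒱 V hV))

lemma continuous_union : Continuous fun p : HypF X × HypF X => p.1.union p.2 := by
  refine continuous_of_isOpen_preimage (fun W hW => ?_) (fun V hV => ?_)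
  · have h : (fun p : HypF X × HypF X => p.1.union p.2) ⁻¹' {S | S.1 ⊆ W} =
        {S | S.1 ⊆ W} ×ˢ {S | S.1 ⊆ W} := by
      ext p; exact union_subset_iff
    rw [h]
    exact (isOpen_setOf_subset hW).prod (isOpen_setOf_subset hW)
  · have h : (fun p : HypF X × HypF X => p.1.union p.2) ⁻¹' {S | (S.1 ∩ V).Nonempty} =
        Prod.fst ⁻¹' {S | (S.1 ∩ V).Nonempty} ∪ Prod.snd ⁻¹' {S | (S.1 ∩ V).Nonempty} := by
      ext p
      show ((p.1.1 ∪ p.2.1) ∩ V).Nonempty ↔ _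
      rw [union_inter_distrib_right, union_nonempty]
      rfl
    rw [h]
    exact ((isOpen_setOf_inter_nonempty hV).preimage continuous_fst).union
      ((isOpen_setOf_inter_nonempty hV).preimage continuous_snd)

variable [T1Space X]

def sing (x : X) : HypF X :=
  ⟨{x}, singleton_nonempty x, isClosed_singleton⟩

lemma continuous_sing : Continuous (sing : X → HypF X) := by
  refine continuous_of_isOpen_preimage (fun W hW => ?_) (fun V hV => ?_)
  · simpa [sing] using hW
  · simpa [sing] using hV

lemma mem_closure_setOf_finite (A : HypF X) :
    A ∈ closure {B : HypF X | B.1 ⊆ A.1 ∧ B.1.Finite} := by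
  classical
  obtain ⟨a₀, ha₀⟩ := A.2.1
  let approx : Finset X → HypF X := fun P =>
    ⟨insert a₀ (↑P ∩ A.1), insert_nonempty _ _,
      ((P.finite_toSet.inter_of_left _).insert a₀).isClosed⟩
  have happrox_sub : ∀ P, (approx P).1 ⊆ A.1 := fun P => insert_subset ha₀ inter_subset_right
  refine mem_closure_of_tendsto (f := approx) (b := atTop) ?_ (Eventually.of_forall fun P =>
    ⟨happrox_sub P, (P.finite_toSet.inter_of_left _).insert a₀⟩)
  refine TopologicalSpace.tendsto_nhds_generateFrom_iff.2 ?_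
  rintro _ ⟨𝒱, -, rfl⟩ ⟨hA𝒱, hmeet⟩
  have : Nonempty X := ⟨a₀⟩
  choose! a ha using hmeet
  filter_upwards [eventually_ge_atTop (𝒱.image a)] with P hP
  refine ⟨(happrox_sub P).trans hA𝒱, fun V hV => ⟨a V, ?_, (ha V hV).2⟩⟩
  exact mem_insert_of_mem _ ⟨hP (Finset.mem_image_of_mem a hV), (ha V hV).1⟩

lemma union_sing_of_mem {A : HypF X} {a : X} (ha : a ∈ A.1) : A.union (sing a) = A :=
  Subtype.ext (union_eq_self_of_subset_right (singleton_subset_iff.2 ha))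

lemma mem_of_finite_of_subset {𝒞 : Set (HypF X)} {Z : Set X}
    (hsing : ∀ z ∈ Z, sing z ∈ 𝒞) (hinsert : ∀ A ∈ 𝒞, ∀ z ∈ Z, A.union (sing z) ∈ 𝒞)
    {A : HypF X} (hAZ : A.1 ⊆ Z) (hA : A.1.Finite) : A ∈ 𝒞 := by
  obtain ⟨s, hne, hcl⟩ := A
  simp only at hAZ hA
  revert hne hcl hAZ
  induction s, hA using Set.Finite.induction_on with
  | empty => exact fun hne => absurd hne not_nonempty_empty
  | @insert a s _ hs ih =>
    intro hne hcl hAZ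
    have haZ : a ∈ Z := hAZ (mem_insert a s)
    obtain rfl | hsne := s.eq_empty_or_nonempty
    · rw [show (⟨insert a ∅, hne, hcl⟩ : HypF X) = sing a from Subtype.ext (insert_empty_eq a)]
      exact hsing a haZ
    · have hs𝒞 := ih hsne hs.isClosed ((subset_insert a s).trans hAZ)
      rw [show (⟨insert a s, hne, hcl⟩ : HypF X) = union ⟨s, hsne, hs.isClosed⟩ (sing a) from
        Subtype.ext union_singleton.symm]
      exact hinsert _ hs𝒞 a haZ

lemma isPreconnected_setOf_subset {Z : Set X} (hZ : IsPreconnected Z) :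
    IsPreconnected {A : HypF X | A.1 ⊆ Z} := by
  obtain rfl | ⟨z₀, hz₀⟩ := Z.eq_empty_or_nonempty
  · convert isPreconnected_empty
    exact eq_empty_of_forall_notMem fun A hA => A.2.1.ne_empty (subset_empty_iff.1 hA)
  set 𝒵 := {A : HypF X | A.1 ⊆ Z}
  set 𝒞 := connectedComponentIn 𝒵 (sing z₀)
  have hsing : ∀ z ∈ Z, sing z ∈ 𝒞 := fun z hz =>
    (hZ.image _ continuous_sing.continuousOn).subset_connectedComponentIn
      (mem_image_of_mem _ hz₀) (image_subset_iff.2 fun _ => singleton_subset_iff.2)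
      (mem_image_of_mem _ hz)
  have hinsert : ∀ A ∈ 𝒞, ∀ z ∈ Z, A.union (sing z) ∈ 𝒞 := by
    intro A hA z hz
    obtain ⟨a, ha⟩ := A.2.1
    have hAZ : A.1 ⊆ Z := connectedComponentIn_subset _ _ hA
    have hcont : Continuous fun z => A.union (sing z) :=
      continuous_union.comp (continuous_const.prodMk continuous_sing)
    have h𝒞 : 𝒞 = connectedComponentIn 𝒵 A := connectedComponentIn_eq hA
    rw [h𝒞]
    refine (hZ.image _ hcont.continuousOn).subset_connectedComponentIn
      ⟨a, hAZ ha, union_sing_of_mem ha⟩ ?_ (mem_image_of_mem _ hz)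
    exact image_subset_iff.2 fun z hz => union_subset hAZ (singleton_subset_iff.2 hz)
  refine (isPreconnected_connectedComponentIn (x := sing z₀)).subset_closure
    (connectedComponentIn_subset _ _)
    fun A hA => closure_mono ?_ (mem_closure_setOf_finite A)
  exact fun B hB => mem_of_finite_of_subset hsing hinsert (hB.1.trans hA) hB.2

end HypF

/-- Let `T, Z ∈ F(X)` with `Z` connected and let `f` be a
continuous selection for `F(X)`. If `q = f(T ∪ D)` for some nonempty closed
`D ⊆ Z`, then `f(T ∪ S)` lies in the connected component of `q` for every
nonempty closed `S ⊆ Z`. -/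
theorem statement12 (X : Type*) [TopologicalSpace X] [T2Space X]
    (f : HypF X → X) (hf : IsContinuousSelection f)
    (T Z : HypF X) (hZ : IsConnected Z.1)
    (q : X) (D : HypF X) (hD : D.1 ⊆ Z.1) (hq : f (T.union D) = q)
    (S : HypF X) (hS : S.1 ⊆ Z.1) :
    f (T.union S) ∈ connectedComponent q := by
  have hcont : Continuous fun A : HypF X => f (T.union A) :=
    hf.1.comp (HypF.continuous_union.comp (continuous_const.prodMk continuous_id))
  exact ((HypF.isPreconnected_setOf_subset hZ.isPreconnected).image _ hcont.continuousOn
    ).subset_connectedComponent ⟨D, hD, hq⟩ ⟨S, hS, rfl⟩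
end

section
/- Let X be an infinite Hausdorff space, f a continuous selection for F(X) with p = f(X) a cut point of X, and suppose X is totally disconnected at p. If {p} is a countable intersection of clopen subsets of X, then p is countably-approachable. -/
open Set Filter Topology

variable {X : Type*} [TopologicalSpace X]

/-!
Write `O n = H 0 ∩ ⋯ ∩ H n`. Since `f(X) = p` and `p` is not isolated, continuity of `f` at `X`
forces `f(S)` close to `p` whenever the closed set `S` contains `(O n)ᶜ` for large `n`. A minimality
argument on finite sets `Φ` with `f((O n)ᶜ ∪ Φ) ∈ O n` produces, for every `n`, a nonempty clopen
set `E n ∌ p` consisting of values `f(S)` with `S ⊇ (O n)ᶜ`; hence `E n → p`. One side `U` of the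
cut at `p` meets infinitely many `E n`, and the clopen pieces `E n ∩ U`, converging to `p`, have a
union that witnesses that `p` is countably-approachable.
-/

namespace HypF

def insertPoint [T1Space X] (z : X) {D : Set X} (hD : IsClosed D) : HypF X :=
  ⟨insert z D, insert_nonempty z D, by simpa only [insert_eq] using isClosed_singleton.union hD⟩

lemma continuous_insertPoint [T1Space X] {D : Set X} (hD : IsClosed D) :
    Continuous fun z : X => insertPoint z hD := by
  refine continuous_generateFrom_iff.2 ?_
  rintro _ ⟨𝒱, h𝒱, rfl⟩
  have hpre : (fun z : X => insertPoint z hD) ⁻¹'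
      {S : HypF X | S.1 ⊆ (⋃ V ∈ 𝒱, V) ∧ ∀ V ∈ 𝒱, (S.1 ∩ V).Nonempty} =
      ((⋃ V ∈ 𝒱, V) ∩ {_z | D ⊆ ⋃ V ∈ 𝒱, V}) ∩
        ⋂ V ∈ 𝒱, (V ∪ {_z | (D ∩ V).Nonempty}) := by
    ext z
    simp only [mem_inter_iff, mem_iInter, mem_union, mem_ofPred_eq]
    change (insert z D ⊆ _ ∧ ∀ V ∈ 𝒱, (insert z D ∩ V).Nonempty) ↔ _
    simp only [insert_eq, union_subset_iff, singleton_subset_iff, union_inter_distrib_right,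
      union_nonempty, singleton_inter_nonempty]
  rw [hpre]
  exact ((isOpen_biUnion h𝒱).inter isOpen_const).inter
    (isOpen_biInter_finset fun V hV => (h𝒱 V hV).union isOpen_const)

lemma exists_finset_forall_mem_of_isOpen {T : Set (HypF X)} (hT : IsOpen T) {S₀ : HypF X}
    (hS₀ : S₀ ∈ T) : ∃ 𝒱 : Finset (Set X), (∀ V ∈ 𝒱, IsOpen V ∧ (S₀.1 ∩ V).Nonempty) ∧
      ∀ S : HypF X, S.1 ⊆ S₀.1 → (∀ V ∈ 𝒱, (S.1 ∩ V).Nonempty) → S ∈ T := by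
  classical
  induction hT generalizing S₀ with
  | basic B hB =>
    obtain ⟨𝒱, h𝒱, rfl⟩ := hB
    exact ⟨𝒱, fun V hV => ⟨h𝒱 V hV, hS₀.2 V hV⟩, fun S hS hhit => ⟨hS.trans hS₀.1, hhit⟩⟩
  | univ => exact ⟨∅, by simp, fun S _ _ => trivial⟩
  | inter T₁ T₂ _ _ ih₁ ih₂ =>
    obtain ⟨𝒱₁, h𝒱₁, hT₁⟩ := ih₁ hS₀.1
    obtain ⟨𝒱₂, h𝒱₂, hT₂⟩ := ih₂ hS₀.2
    refine ⟨𝒱₁ ∪ 𝒱₂, fun V hV => ?_, fun S hS hhit => ⟨?_, ?_⟩⟩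
    · rcases Finset.mem_union.1 hV with hV | hV
      exacts [h𝒱₁ V hV, h𝒱₂ V hV]
    · exact hT₁ S hS fun V hV => hhit V (Finset.mem_union_left _ hV)
    · exact hT₂ S hS fun V hV => hhit V (Finset.mem_union_right _ hV)
  | sUnion 𝒯 _ ih =>
    obtain ⟨T, hT, hS₀T⟩ := hS₀
    obtain ⟨𝒱, h𝒱, hsub⟩ := ih T hT hS₀T
    exact ⟨𝒱, h𝒱, fun S hS hhit => ⟨T, hT, hsub S hS hhit⟩⟩

lemma exists_finset_subset_forall_mem {T : Set (HypF X)} (hT : IsOpen T) {S₀ : HypF X}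
    (hS₀ : S₀ ∈ T) {D : Set X} (hD : S₀.1 ⊆ closure D) :
    ∃ F : Finset X, ↑F ⊆ D ∧ ∀ S : HypF X, ↑F ⊆ S.1 → S.1 ⊆ S₀.1 → S ∈ T := by
  classical
  obtain ⟨𝒱, h𝒱, hT⟩ := exists_finset_forall_mem_of_isOpen hT hS₀
  have hmeet : ∀ V ∈ 𝒱, (V ∩ D).Nonempty := fun V hV =>
    have ⟨x, hxS₀, hxV⟩ := (h𝒱 V hV).2
    mem_closure_iff.1 (hD hxS₀) V (h𝒱 V hV).1 hxV
  have : Nonempty X := S₀.2.1.to_subtype.map Subtype.val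
  choose! w hwV hwD using hmeet
  refine ⟨𝒱.image w, by simpa [Set.subset_def] using hwD, fun S hFS hSS₀ => hT S hSS₀ ?_⟩
  exact fun V hV => ⟨w V, hFS (Finset.mem_coe.2 (Finset.mem_image_of_mem w hV)), hwV V hV⟩

end HypF

lemma isClosed_insert_iUnion_of_tendsto_smallSets [T2Space X] {p : X} {G : ℕ → Set X}
    (hG : ∀ n, IsClosed (G n)) (hlim : Tendsto G atTop (𝓝 p).smallSets) :
    IsClosed (insert p (⋃ n, G n)) := by
  refine closure_subset_iff_isClosed.1 fun q hq => ?_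
  rcases eq_or_ne q p with rfl | hqp
  · exact mem_insert q _
  obtain ⟨u, v, hu, hv, hqu, hpv, huv⟩ := t2_separation hqp
  obtain ⟨M, hM⟩ := eventually_atTop.1 (tendsto_smallSets_iff.1 hlim v (hv.mem_nhds hpv))
  have hsplit : insert p (⋃ n, G n) ⊆ (⋃ n ∈ Finset.range M, G n) ∪ v := by
    refine insert_subset (Or.inr hpv) (iUnion_subset fun n => ?_)
    rcases lt_or_ge n M with h | h
    · exact (subset_biUnion_of_mem (Finset.mem_coe.2 (Finset.mem_range.2 h))).trans
        subset_union_left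
    · exact (hM n h).trans subset_union_right
  have hq' := closure_mono hsplit hq
  rw [closure_union, (isClosed_biUnion_finset fun n _ => hG n).closure_eq] at hq'
  rcases hq' with hq' | hq'
  · obtain ⟨n, -, hn⟩ := mem_iUnion₂.1 hq'
    exact mem_insert_of_mem p (mem_iUnion.2 ⟨n, hn⟩)
  · exact absurd hq' ((huv.closure_right hu).notMem_of_mem_left hqu)

lemma mem_insert_iUnion_add_iff {α : Type*} {p : α} {G : ℕ → Set α} (hpG : ∀ n, p ∉ G n) (i : ℕ)
    {x : α}
    (hx : x ∈ insert p (⋃ n, G n)) :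
    x ∈ insert p (⋃ n, G (n + i)) ↔ x ∈ (⋃ n ∈ Finset.range i, G n)ᶜ ∪ ⋃ n, G (n + i) := by
  rcases hx with rfl | hx
  · simp only [mem_insert_iff, true_or, mem_union, mem_compl_iff, mem_iUnion₂, hpG,
      exists_false, not_false_eq_true]
  obtain ⟨m, hm⟩ := mem_iUnion.1 hx
  refine ⟨fun h => h.elim (fun hxp => absurd (hxp ▸ hm) (hpG m)) Or.inr, fun h => ?_⟩
  refine mem_insert_of_mem p (h.elim (fun hxi => mem_iUnion.2 ⟨m - i, ?_⟩) id)
  have him : i ≤ m := not_lt.1 fun hmi => hxi (mem_iUnion₂.2 ⟨m, Finset.mem_range.2 hmi, hm⟩)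
  rwa [Nat.sub_add_cancel him]

/-- The witness is `U = ⋃ n, G n`; the tails `{p} ∪ ⋃ n ≥ i, G n` form the countable clopen base
at `p` in `cl U = U ∪ {p}`. -/
lemma countablyApproachable_of_tendsto_smallSets [T2Space X] {p : X} {G : ℕ → Set X}
    (hG : ∀ n, IsClopen (G n)) (hpG : ∀ n, p ∉ G n) (hlim : Tendsto G atTop (𝓝 p).smallSets)
    (hne : ∃ᶠ n in atTop, (G n).Nonempty) : CountablyApproachable p := by
  set U := ⋃ n, G n
  have hpU : p ∉ U := fun h => (mem_iUnion.1 h).elim fun n hn => hpG n hn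
  have hpclU : p ∈ closure U := mem_closure_iff_nhds.2 fun t ht => by
    obtain ⟨n, ⟨x, hx⟩, hnt⟩ := (hne.and_eventually (tendsto_smallSets_iff.1 hlim t ht)).exists
    exact ⟨x, hnt hx, mem_iUnion.2 ⟨n, hx⟩⟩
  have hclU : closure U = insert p U := (closure_minimal (subset_insert p U)
    (isClosed_insert_iUnion_of_tendsto_smallSets (fun n => (hG n).isClosed) hlim)).antisymm
    (insert_subset hpclU subset_closure)
  refine Or.inr ⟨U, isOpen_iUnion fun n => (hG n).isOpen, fun x hx hxp => hpU (hxp ▸ hx),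
    by rw [union_singleton, hclU], fun hp => ⟨range fun i =>
      Subtype.val ⁻¹' insert p (⋃ n, G (n + i)), countable_range _, ?_, ?_⟩⟩
  · rintro _ ⟨i, rfl⟩
    have hopen : IsOpen ((⋃ n ∈ Finset.range i, G n)ᶜ ∪ ⋃ n, G (n + i)) :=
      (isClosed_biUnion_finset fun n _ => (hG n).isClosed).isOpen_compl.union
        (isOpen_iUnion fun n => (hG _).isOpen)
    refine ⟨⟨(isClosed_insert_iUnion_of_tendsto_smallSets (fun n => (hG _).isClosed)
      (hlim.comp (tendsto_add_atTop_nat i))).preimage continuous_subtype_val,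
      isOpen_induced_iff.2 ⟨_, hopen, ?_⟩⟩, mem_insert p _⟩
    ext ⟨x, hx⟩
    exact (mem_insert_iUnion_add_iff hpG i (hclU ▸ hx)).symm
  · intro W hW hpW
    obtain ⟨W', hW', rfl⟩ := isOpen_induced_iff.1 hW
    obtain ⟨M, hM⟩ := eventually_atTop.1 (tendsto_smallSets_iff.1 hlim W' (hW'.mem_nhds hpW))
    refine ⟨_, mem_range_self M, fun x hx => ?_⟩
    rcases hx with hx | hx
    · rw [mem_preimage, hx]
      exact hpW
    · obtain ⟨n, hn⟩ := mem_iUnion.1 hx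
      exact hM (n + M) (Nat.le_add_left M n) hn

lemma isOpen_and_closure_subset_insert_of_compl_singleton_eq_union {p : X} {A B : Set X}
    (hAB : ({p}ᶜ : Set X) = A ∪ B) (hcl : closure A ∩ closure B = {p}) :
    IsOpen A ∧ p ∉ A ∧ closure A ⊆ insert p A := by
  have hpA : p ∉ A := fun h => (hAB.superset (Or.inl h) : p ∈ ({p}ᶜ : Set X)) rfl
  have hpB : p ∈ closure B := (hcl.superset rfl).2
  have hmeet : ∀ x ∈ closure A, x ∈ closure B → x = p := fun x hxA hxB =>
    hcl.subset ⟨hxA, hxB⟩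
  have hA : A = (closure B)ᶜ := by
    ext x
    refine ⟨fun hx hxB => hpA (hmeet x (subset_closure hx) hxB ▸ hx), fun hx => ?_⟩
    have hxp : x ∈ ({p}ᶜ : Set X) := fun h => hx (h ▸ hpB)
    rw [hAB] at hxp
    exact hxp.resolve_right fun h => hx (subset_closure h)
  refine ⟨hA ▸ isClosed_closure.isOpen_compl, hpA, fun x hx => ?_⟩
  rcases eq_or_ne x p with rfl | hxp
  · exact mem_insert x A
  · rw [hA]
    exact mem_insert_of_mem p fun hxB => hxp (hmeet x hx hxB)

lemma IsCutPoint.exists_frequently_mem {p : X} (hp : IsCutPoint p) {s : ℕ → X}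
    (hs : ∀ n, s n ≠ p) :
    ∃ U : Set X, (IsOpen U ∧ p ∉ U ∧ closure U ⊆ insert p U) ∧ ∃ᶠ n in atTop, s n ∈ U := by
  obtain ⟨A, B, hAB, hcl⟩ := hp
  rcases frequently_or_distrib.1 (Frequently.of_forall (f := atTop) fun n =>
    show s n ∈ A ∪ B from hAB ▸ hs n) with hA | hB
  · exact ⟨A, isOpen_and_closure_subset_insert_of_compl_singleton_eq_union hAB hcl, hA⟩
  · exact ⟨B, isOpen_and_closure_subset_insert_of_compl_singleton_eq_union
      (hAB.trans (union_comm A B)) ((inter_comm _ _).trans hcl), hB⟩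

lemma IsClopen.inter_of_closure_subset_insert {p : X} {E U : Set X} (hE : IsClopen E)
    (hpE : p ∉ E) (hU : IsOpen U) (hcl : closure U ⊆ insert p U) : IsClopen (E ∩ U) := by
  have hEU : E ∩ U = E ∩ closure U :=
    (inter_subset_inter_right E subset_closure).antisymm fun x ⟨hxE, hxU⟩ =>
      ⟨hxE, (hcl hxU).resolve_left fun h => hpE (h ▸ hxE)⟩
  exact ⟨hEU ▸ hE.isClosed.inter isClosed_closure, hE.isOpen.inter hU⟩

lemma eventually_notMem_of_iInter_eq_singleton {α : Type*} {O : ℕ → Set α} (hO : Antitone O)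
    {p : α} (hOp : ⋂ n, O n = {p}) {x : α} (hx : x ≠ p) : ∀ᶠ n in atTop, x ∉ O n := by
  have hx' : x ∉ ⋂ n, O n := by rwa [hOp]
  obtain ⟨k, hk⟩ := by simpa only [mem_iInter, not_forall] using hx'
  exact eventually_atTop.2 ⟨k, fun n hn hxn => hk (hO hn hxn)⟩

namespace IsContinuousSelection

variable {f : HypF X → X}

lemma tendsto_image_smallSets [Nonempty X] (hf : IsContinuousSelection f) {p : X}
    (hp : f (HypF.top X) = p) (hnp : ¬IsOpen ({p} : Set X)) {ι : Type*} {l : Filter ι}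
    {O : ι → Set X} (hO : ∀ x, x ≠ p → ∀ᶠ i in l, x ∉ O i) :
    Tendsto (fun i => f '' {S | (O i)ᶜ ⊆ S.1}) l (𝓝 p).smallSets := by
  refine tendsto_smallSets_iff.2 fun t ht => ?_
  obtain ⟨W, hWt, hWo, hpW⟩ := mem_nhds_iff.1 ht
  obtain ⟨F, hFp, hFW⟩ := HypF.exists_finset_subset_forall_mem (hWo.preimage hf.1)
    (show f (HypF.top X) ∈ W from hp ▸ hpW) (D := {p}ᶜ)
    (by rw [dense_compl_singleton_iff_not_open.2 hnp |>.closure_eq]; exact subset_univ _)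
  have hFO : ∀ᶠ i in l, ∀ x ∈ F, x ∉ O i :=
    (Filter.eventually_all_finset F).2 fun x hx => hO x (hFp hx)
  filter_upwards [hFO] with i hi
  rintro _ ⟨S, hS, rfl⟩
  exact hWt (hFW S (fun x hx => hS (hi x hx)) (subset_univ _))

/-- Given a finite `Φ` with `f(Kᶜ ∪ Φ) ∈ K`, shrink `Φ` to a minimal such set; then for its
`f`-value `ψ` and `D = Kᶜ ∪ (Φ \ {ψ})`, the continuous map `z ↦ f(D ∪ {z})` fixes `ψ` and, near `ψ`,
can only return `z` itself, so a clopen neighbourhood of `ψ` consists of values of `f`. -/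
lemma exists_isClopen_subset_image [T1Space X] (hf : IsContinuousSelection f) {K : Set X}
    (hK : IsClopen K) (Φ : Finset X) (S : HypF X) (hS : S.1 = Kᶜ ∪ Φ) (hfS : f S ∈ K) :
    ∃ ψ ∈ Φ, ∃ E : Set X, IsClopen E ∧ ψ ∈ E ∧ E ⊆ f '' {S | Kᶜ ⊆ S.1} := by
  classical
  induction Φ using Finset.strongInduction generalizing S with
  | H Φ ih =>
    have hψΦ : f S ∈ Φ := by
      have := hf.2 S
      rw [hS] at this
      exact this.resolve_left (not_not.2 hfS)
    set ψ := f S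
    set D : Set X := Kᶜ ∪ ↑(Φ.erase ψ)
    by_cases hD : ∃ S' : HypF X, S'.1 = D ∧ f S' ∈ K
    · obtain ⟨S', hS'D, hfS'⟩ := hD
      obtain ⟨ψ', hψ', hE⟩ := ih _ (Finset.erase_ssubset hψΦ) S' hS'D hfS'
      exact ⟨ψ', Finset.mem_of_mem_erase hψ', hE⟩
    simp only [not_exists, not_and] at hD
    have hDc : IsClosed D := hK.isOpen.isClosed_compl.union (Finset.finite_toSet _).isClosed
    set χ : X → X := fun z => f (HypF.insertPoint z hDc)
    have hχ : Continuous χ := hf.1.comp (HypF.continuous_insertPoint hDc)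
    have hχψ : χ ψ = ψ := by
      have : HypF.insertPoint ψ hDc = S := Subtype.ext <| by
        change insert ψ (Kᶜ ∪ ↑(Φ.erase ψ)) = S.1
        rw [hS, ← union_insert, ← Finset.coe_insert, Finset.insert_erase hψΦ]
      change f _ = ψ
      rw [this]
    have hfix : ∀ z ∈ K ∩ χ ⁻¹' K ∩ χ ⁻¹' (χ ⁻¹' K), χ z = z := by
      rintro z ⟨⟨-, hχz⟩, hχχz⟩
      rcases hf.2 (HypF.insertPoint z hDc) with h | h | h
      · exact h
      · exact absurd hχz h
      · refine absurd hχχz (hD _ ?_)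
        exact insert_eq_of_mem (Or.inr h)
    refine ⟨ψ, hψΦ, K ∩ χ ⁻¹' K ∩ χ ⁻¹' (χ ⁻¹' K),
      (hK.inter (hK.preimage hχ)).inter ((hK.preimage hχ).preimage hχ), ?_, ?_⟩
    · simp only [mem_inter_iff, mem_preimage, hχψ, and_self]
      exact hfS
    · exact fun z hz => ⟨HypF.insertPoint z hDc, subset_union_left.trans (subset_insert z D),
        hfix z hz⟩

lemma exists_isClopen_subset_image_compl [T1Space X] [Nonempty X]
    (hf : IsContinuousSelection f) {p : X} (hp : f (HypF.top X) = p)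
    (hnp : ¬IsOpen ({p} : Set X)) {O : ℕ → Set X} (hO : ∀ n, IsClopen (O n)) (hanti : Antitone O)
    (hOp : ⋂ n, O n = {p}) (n : ℕ) :
    ∃ E : Set X, IsClopen E ∧ E.Nonempty ∧ p ∉ E ∧ E ⊆ f '' {S | (O n)ᶜ ⊆ S.1} := by
  classical
  have hesc := fun x => eventually_notMem_of_iInter_eq_singleton hanti hOp (x := x)
  have hpO : ∀ k, p ∈ O k := mem_iInter.1 (hOp.superset rfl)
  obtain ⟨x₀, hx₀⟩ := (dense_compl_singleton_iff_not_open.2 hnp).nonempty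
  obtain ⟨m, hm, hx₀m, hmn⟩ := ((tendsto_smallSets_iff.1
    (hf.tendsto_image_smallSets hp hnp hesc) _ ((hO n).isOpen.mem_nhds (hpO n))).and
    ((hesc x₀ hx₀).and (eventually_ge_atTop n))).exists
  let S₀ : HypF X := ⟨(O m)ᶜ, ⟨x₀, hx₀m⟩, (hO m).isOpen.isClosed_compl⟩
  obtain ⟨F, hFS₀, hF⟩ := HypF.exists_finset_subset_forall_mem
    ((hO n).isOpen.preimage hf.1) (hm ⟨S₀, subset_refl (O m)ᶜ, rfl⟩) (D := S₀.1) subset_closure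
  let S₁ : HypF X := ⟨(O n)ᶜ ∪ ↑(insert x₀ F),
    (Finset.coe_nonempty.2 (Finset.insert_nonempty x₀ F)).mono subset_union_right,
    (hO n).isOpen.isClosed_compl.union (Finset.finite_toSet _).isClosed⟩
  have hS₁S₀ : S₁.1 ⊆ S₀.1 := by
    refine union_subset (compl_subset_compl.2 (hanti hmn)) ?_
    rw [Finset.coe_insert]
    exact insert_subset hx₀m hFS₀
  have hfS₁ : f S₁ ∈ O n := hF S₁
    ((Finset.coe_subset.2 (Finset.subset_insert x₀ F)).trans subset_union_right) hS₁S₀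
  obtain ⟨ψ, hψΦ, E, hE, hψE, hEf⟩ := exists_isClopen_subset_image hf (hO n) _ S₁ rfl hfS₁
  have hψp : ψ ≠ p := fun h => hS₁S₀ (subset_union_right (Finset.mem_coe.2 hψΦ)) (h ▸ hpO m)
  obtain ⟨k, hk⟩ := (hesc ψ hψp).exists
  exact ⟨E \ O k, hE.diff (hO k), ⟨ψ, hψE, hk⟩, fun h => h.2 (hpO k), sdiff_subset.trans hEf⟩

end IsContinuousSelection

theorem statement14_general (X : Type*) [TopologicalSpace X] [T2Space X] [Infinite X]
    (f : HypF X → X) (hf : IsContinuousSelection f)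
    (p : X) (hp : f (HypF.top X) = p)
    (hcut : IsCutPoint p)
    (H : ℕ → Set X) (hclopen : ∀ n, IsClopen (H n)) (hH : (⋂ n, H n) = {p}) :
    CountablyApproachable p := by
  by_cases hnp : IsOpen ({p} : Set X)
  · exact Or.inl hnp
  have hO : ∀ n, IsClopen (dissipate H n) := fun n =>
    (finite_Iic n).isClopen_biInter fun k _ => hclopen k
  have hOp : ⋂ n, dissipate H n = {p} := iInter_dissipate.trans hH
  choose E hE hEne hpE hEf using
    hf.exists_isClopen_subset_image_compl hp hnp hO antitone_dissipate hOp
  choose s hs using hEne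
  obtain ⟨U, ⟨hU, hpU, hclU⟩, hsU⟩ := hcut.exists_frequently_mem fun n h => hpE n (h ▸ hs n)
  refine countablyApproachable_of_tendsto_smallSets (G := fun n => E n ∩ U)
    (fun n => (hE n).inter_of_closure_subset_insert (hpE n) hU hclU) (fun n h => hpU h.2) ?_
    (hsU.mono fun n hn => ⟨s n, hs n, hn⟩)
  have hlim := hf.tendsto_image_smallSets hp hnp fun x hx =>
    eventually_notMem_of_iInter_eq_singleton antitone_dissipate hOp hx
  exact hlim.smallSets_mono (Eventually.of_forall fun n => inter_subset_left.trans (hEf n))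

/-- Let `f` be a continuous selection with `p = f(X)` a cut point
of `X`, and let `X` be totally disconnected at `p`. If `{p}` is a countable
intersection of clopen subsets of `X`, then `p` is countably-approachable. -/
theorem statement14 (X : Type*) [TopologicalSpace X] [T2Space X] [Infinite X]
    (f : HypF X → X) (hf : IsContinuousSelection f)
    (p : X) (hp : f (HypF.top X) = p)
    (hcut : IsCutPoint p) (htd : TotallyDisconnectedAt p)
    (H : ℕ → Set X) (hclopen : ∀ n, IsClopen (H n)) (hH : (⋂ n, H n) = {p}) :
    CountablyApproachable p :=
  statement14_general X f hf p hp hcut H hclopen hH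
end
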